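/- arXiv:1710.05737 — 2 statements merged into one kernel-verified Lean document; each statement's English description precedes it below -/
import Mathlib

section
/- Let p, q ≥ 2 be relatively prime integers, let c, c' ∈ A_{pq}^ℤ, and let k > 0. If F_{p,q}^n(c)(k) = F_{p,q}^n(c')(k) for every integer n with −(k−1) ≤ n ≤ k−1, then c(j) = c'(j) for every j with 1 ≤ j ≤ k. In other words, the values of the k-trace tr_{p,q}(c,k)(n) = F_{p,q}^n(c)(k) for −(k−1) ≤ n ≤ k−1 uniquely determine c(1), ..., c(k). -/
/-- The local rule multiplying by `p` in base `pq`: writing `x = x₁q + x₀` with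
`x₀ ∈ {0,…,q-1}`, `x₁ ∈ {0,…,p-1}`, we have `g p q x y = x₀p + y₁`. -/
def g (p q x y : ℕ) : ℕ := x % q * p + y / q

/-- The cellular automaton `G_{p,q}` on configurations. -/
def Gca (p q : ℕ) (c : ℤ → ℕ) : ℤ → ℕ := fun i => g p q (c i) (c (i + 1))

/-- The cellular automaton `F_{p,q} = σ⁻¹ ∘ G_{p,q} ∘ G_{p,q}`, where `σ` is the left
shift `σ(c)(i) = c(i+1)`. Its inverse is `Fca q p`. -/
def Fca (p q : ℕ) (c : ℤ → ℕ) : ℤ → ℕ := fun i => Gca p q (Gca p q c) (i - 1)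

/-- Integer iterates of `F_{p,q}`: for `k ≥ 0` iterate `F_{p,q}`, for `k < 0` iterate
the inverse `F_{q,p}`. -/
def Fiter (p q : ℕ) (k : ℤ) (c : ℤ → ℕ) : ℤ → ℕ :=
  if 0 ≤ k then (Fca p q)^[k.toNat] c else (Fca q p)^[(-k).toNat] c

/-!
A value `u = G(d)(i - 1) = g(d(i - 1), d(i))` can be read off from the column to its right:
`u mod p = ⌊d(i) / q⌋`, and `u mod q = ⌊F(d)(i) / p⌋` because `F(d)(i) = g(u, G(d)(i))`.
As `p` and `q` are coprime, the Chinese remainder theorem recovers `u`; in the same way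
`F(d)(i - 1)` is recovered from `G(d)(i - 1)` and `G(F(d))(i - 1)`. Hence, in the space-time
diagram `(n, i) ↦ F^n(c)(i)`, the cells `(n - 1, i)`, `(n, i)`, `(n + 1, i)` determine the cell
`(n, i - 1)`, so agreement of the traces at column `k` for `|n| ≤ k - 1` propagates to
column `k - s` for `|n| ≤ k - 1 - s`. At time `0` this is `c(j) = c'(j)` for `1 ≤ j ≤ k`.
-/

section Digits

variable {p q : ℕ}

lemma g_lt (x : ℕ) {y : ℕ} (hy : y < p * q) : g p q x y < p * q := by
  have hq : 0 < q := Nat.pos_of_ne_zero (by rintro rfl; simp at hy)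
  have hx : x % q < q := Nat.mod_lt x hq
  have hy' : y / q < p := Nat.div_lt_of_lt_mul (mul_comm p q ▸ hy)
  unfold g
  nlinarith

lemma g_div (x : ℕ) {y : ℕ} (hy : y < p * q) : g p q x y / p = x % q := by
  have hy' : y / q < p := Nat.div_lt_of_lt_mul (mul_comm p q ▸ hy)
  rw [g, add_comm, Nat.add_mul_div_right _ _ (Nat.zero_lt_of_lt hy'), Nat.div_eq_of_lt hy',
    zero_add]

lemma g_mod (x : ℕ) {y : ℕ} (hy : y < p * q) : g p q x y % p = y / q := by
  have hy' : y / q < p := Nat.div_lt_of_lt_mul (mul_comm p q ▸ hy)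
  rw [g, add_comm, Nat.add_mul_mod_self_right, Nat.mod_eq_of_lt hy']

lemma g_g (x : ℕ) {y z : ℕ} (hy : y < p * q) (hz : z < p * q) :
    g q p (g p q x y) (g p q y z) = y := by
  rw [g, g_mod x hy, g_div y hz, Nat.div_add_mod']

lemma eq_of_mod_eq_of_mod_eq (hpq : Nat.Coprime p q) {x y : ℕ} (hx : x < p * q)
    (hy : y < p * q) (hp : x % p = y % p) (hq : x % q = y % q) : x = y :=
  ((Nat.modEq_and_modEq_iff_modEq_mul hpq).1 ⟨hp, hq⟩).eq_of_lt_of_lt hx hy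

end Digits

section Automaton

variable {p q : ℕ} {c c' d d' : ℤ → ℕ}

lemma Gca_lt (hc : ∀ i, c i < p * q) (i : ℤ) : Gca p q c i < p * q :=
  g_lt _ (hc _)

lemma Fca_lt (hc : ∀ i, c i < p * q) (i : ℤ) : Fca p q c i < p * q :=
  Gca_lt (Gca_lt hc) _

lemma Gca_sub_one (c : ℤ → ℕ) (i : ℤ) : Gca p q c (i - 1) = g p q (c (i - 1)) (c i) := by
  rw [Gca, sub_add_cancel]

lemma Fca_apply (c : ℤ → ℕ) (i : ℤ) :
    Fca p q c i = g p q (Gca p q c (i - 1)) (Gca p q c i) := by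
  rw [Fca, Gca_sub_one]

lemma Fca_Fca (hc : ∀ i, c i < p * q) : Fca q p (Fca p q c) = c := by
  have hG : Gca q p (Fca p q c) = Gca p q c := by
    funext j
    rw [Gca, Fca_apply, Fca_apply, add_sub_cancel_right]
    exact g_g _ (Gca_lt hc j) (Gca_lt hc (j + 1))
  funext i
  rw [Fca_apply, hG, Gca_sub_one, Gca]
  exact g_g _ (hc i) (hc (i + 1))

lemma Fca_iterate_lt (hc : ∀ i, c i < p * q) (m : ℕ) (i : ℤ) :
    (Fca p q)^[m] c i < p * q := by
  induction m generalizing i with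
  | zero => exact hc i
  | succ m ih => rw [Function.iterate_succ_apply']; exact Fca_lt ih i

lemma Fiter_lt (hc : ∀ i, c i < p * q) (n : ℤ) (i : ℤ) : Fiter p q n c i < p * q := by
  unfold Fiter
  split
  · exact Fca_iterate_lt hc _ i
  · exact mul_comm q p ▸ Fca_iterate_lt (mul_comm p q ▸ hc) _ i

lemma Fiter_zero (c : ℤ → ℕ) : Fiter p q 0 c = c := by
  simp [Fiter]

lemma Fiter_add_one (hc : ∀ i, c i < p * q) (n : ℤ) :
    Fiter p q (n + 1) c = Fca p q (Fiter p q n c) := by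
  have hc' : ∀ i, c i < q * p := mul_comm p q ▸ hc
  unfold Fiter
  rcases lt_trichotomy n (-1) with hn | rfl | hn
  · rw [if_neg (by omega), if_neg (by omega),
      show (-n).toNat = (-(n + 1)).toNat + 1 by omega, Function.iterate_succ_apply',
      Fca_Fca (Fca_iterate_lt hc' _)]
  · simp [Fca_Fca hc']
  · rw [if_pos (by omega), if_pos (by omega), show (n + 1).toNat = n.toNat + 1 by omega,
      Function.iterate_succ_apply']

variable (hpq : Nat.Coprime p q)
include hpq

lemma Gca_sub_one_eq_of (hd : ∀ i, d i < p * q) (hd' : ∀ i, d' i < p * q) (i : ℤ)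
    (h₀ : d i = d' i) (h₁ : Fca p q d i = Fca p q d' i) :
    Gca p q d (i - 1) = Gca p q d' (i - 1) := by
  refine eq_of_mod_eq_of_mod_eq hpq (Gca_lt hd _) (Gca_lt hd' _) ?_ ?_
  · rw [Gca_sub_one, Gca_sub_one, g_mod _ (hd i), g_mod _ (hd' i), h₀]
  · rw [← g_div _ (Gca_lt hd i), ← g_div _ (Gca_lt hd' i), ← Fca_apply, ← Fca_apply, h₁]

lemma Fca_sub_one_eq_of (hd : ∀ i, d i < p * q) (hd' : ∀ i, d' i < p * q) (i : ℤ)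
    (h₀ : d i = d' i) (h₁ : Fca p q d i = Fca p q d' i)
    (h₂ : Fca p q (Fca p q d) i = Fca p q (Fca p q d') i) :
    Fca p q d (i - 1) = Fca p q d' (i - 1) := by
  have hG₀ := Gca_sub_one_eq_of hpq hd hd' i h₀ h₁
  have hG₁ := Gca_sub_one_eq_of hpq (Fca_lt hd) (Fca_lt hd') i h₁ h₂
  refine eq_of_mod_eq_of_mod_eq hpq (Fca_lt hd _) (Fca_lt hd' _) ?_ ?_
  · rw [Fca_apply, Fca_apply, g_mod _ (Gca_lt hd _), g_mod _ (Gca_lt hd' _), hG₀]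
  · rw [← g_div _ (Fca_lt hd i), ← g_div _ (Fca_lt hd' i), ← Gca_sub_one, ← Gca_sub_one,
      hG₁]

lemma Fiter_sub_one_eq_of (hc : ∀ i, c i < p * q) (hc' : ∀ i, c' i < p * q) (n i : ℤ)
    (h : ∀ m, n - 1 ≤ m → m ≤ n + 1 → Fiter p q m c i = Fiter p q m c' i) :
    Fiter p q n c (i - 1) = Fiter p q n c' (i - 1) := by
  obtain ⟨m, rfl⟩ : ∃ m, n = m + 1 := ⟨n - 1, by ring⟩
  have h₀ := h m (by omega) (by omega)
  have h₁ := h (m + 1) (by omega) (by omega)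
  have h₂ := h (m + 1 + 1) (by omega) (by omega)
  simp only [Fiter_add_one hc, Fiter_add_one hc'] at h₁ h₂ ⊢
  exact Fca_sub_one_eq_of hpq (Fiter_lt hc m) (Fiter_lt hc' m) i h₀ h₁ h₂

lemma Fiter_eq_of_trace_eq (hc : ∀ i, c i < p * q) (hc' : ∀ i, c' i < p * q) {i r : ℤ}
    (h : ∀ n, |n| ≤ r → Fiter p q n c i = Fiter p q n c' i) (s : ℕ) :
    ∀ n, |n| ≤ r - s → Fiter p q n c (i - s) = Fiter p q n c' (i - s) := by
  induction s with
  | zero => simpa using h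
  | succ s ih =>
    intro n hn
    rw [Nat.cast_succ, ← sub_sub]
    refine Fiter_sub_one_eq_of hpq hc hc' n (i - s) fun m hm₁ hm₂ => ih m ?_
    rw [abs_le] at hn ⊢
    omega

end Automaton

theorem stmt6_general (p q : ℕ) (hpq : Nat.Coprime p q)
    (c c' : ℤ → ℕ) (hc : ∀ i, c i < p * q) (hc' : ∀ i, c' i < p * q)
    (k : ℕ)
    (htr : ∀ n : ℤ, -((k : ℤ) - 1) ≤ n → n ≤ (k : ℤ) - 1 →
      Fiter p q n c (k : ℤ) = Fiter p q n c' (k : ℤ)) :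
    ∀ j : ℤ, 1 ≤ j → j ≤ (k : ℤ) → c j = c' j := by
  intro j hj₁ hj₂
  have hcol : ∀ n : ℤ, |n| ≤ k - 1 → Fiter p q n c k = Fiter p q n c' k :=
    fun n hn => htr n (abs_le.mp hn).1 (abs_le.mp hn).2
  obtain ⟨s, rfl⟩ : ∃ s : ℕ, j = k - s := ⟨(k - j).toNat, by omega⟩
  simpa [Fiter_zero] using Fiter_eq_of_trace_eq hpq hc hc' hcol s 0 (by rw [abs_zero]; omega)

theorem stmt6 (p q : ℕ) (hp : 2 ≤ p) (hq : 2 ≤ q) (hpq : Nat.Coprime p q)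
    (c c' : ℤ → ℕ) (hc : ∀ i, c i < p * q) (hc' : ∀ i, c' i < p * q)
    (k : ℕ) (hk : 0 < k)
    (htr : ∀ n : ℤ, -((k : ℤ) - 1) ≤ n → n ≤ (k : ℤ) - 1 →
      Fiter p q n c (k : ℤ) = Fiter p q n c' (k : ℤ)) :
    ∀ j : ℤ, 1 ≤ j → j ≤ (k : ℤ) → c j = c' j :=
  stmt6_general p q hpq c c' hc hc' k htr
end

section
/- Let p, q ≥ 2 be relatively prime integers, let t > 0, let k ≥ 2t+1, and let w₁, w₂ be words of length k over A_{pq}. Then: (1) if int(w₁) < q^{2t}, then int(F_{p,q}^t(w₁)) = 0; and (2) if int(w₂) ≡ int(w₁) + q^{2t} (mod (pq)^k), then int(F_{p,q}^t(w₂)) ≡ int(F_{p,q}^t(w₁)) + 1 (mod (pq)^{k−2t}). -/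
/-- `G_{p,q}` applied to a word. -/
def Gw (p q : ℕ) (w : List ℕ) : List ℕ := List.zipWith (g p q) w w.tail

/-- `F_{p,q}` applied to a word: the `i`-th letter of the image is
`f_{p,q}(w(i), w(i+1), w(i+2))`; the image is two letters shorter. -/
def Fw (p q : ℕ) (w : List ℕ) : List ℕ := Gw p q (Gw p q w)

/-- `int(w)`: the integer having `w` as a base-`b` representation
(the first letter of `w` is the most significant digit). -/
def intw (b : ℕ) (w : List ℕ) : ℕ := Nat.ofDigits b w.reverse

theorem Nat.ModEq.div_of_mul {n m a b : ℕ} (h : a ≡ b [MOD n * m]) : a / n ≡ b / n [MOD m] := by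
  unfold Nat.ModEq at h ⊢
  rw [← Nat.mod_mul_right_div_self, ← Nat.mod_mul_right_div_self, h]

section Words

variable {p q : ℕ}

theorem intw_nil (b : ℕ) : intw b [] = 0 := rfl

theorem intw_cons (b a : ℕ) (w : List ℕ) : intw b (a :: w) = intw b w + b ^ w.length * a := by
  simp [intw, Nat.ofDigits_append, Nat.ofDigits_singleton]

theorem intw_lt_pow_length {b : ℕ} (hb : 1 < b) {w : List ℕ} (hw : ∀ x ∈ w, x < b) :
    intw b w < b ^ w.length := by
  simpa [intw] using Nat.ofDigits_lt_base_pow_length hb (l := w.reverse) (by simpa using hw)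

theorem Gw_nil : Gw p q [] = [] := rfl

theorem Gw_singleton (a : ℕ) : Gw p q [a] = [] := rfl

theorem Gw_cons_cons (a b : ℕ) (w : List ℕ) :
    Gw p q (a :: b :: w) = g p q a b :: Gw p q (b :: w) := rfl

theorem length_Gw (w : List ℕ) : (Gw p q w).length = w.length - 1 := by
  simp [Gw]

theorem length_Gw_iterate (s : ℕ) (w : List ℕ) : ((Gw p q)^[s] w).length = w.length - s := by
  induction s generalizing w with
  | zero => rfl
  | succ s ih => rw [Function.iterate_succ_apply, ih, length_Gw]; omega

theorem Fw_iterate (t : ℕ) : (Fw p q)^[t] = (Gw p q)^[2 * t] := by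
  rw [Function.iterate_mul]
  rfl

theorem g_lt_mul (hq : 0 < q) (x : ℕ) {y : ℕ} (hy : y < p * q) : g p q x y < p * q := by
  have hx : x % q < q := Nat.mod_lt _ hq
  have hy' : y / q < p := Nat.div_lt_of_lt_mul (by rwa [mul_comm])
  unfold g
  nlinarith

theorem forall_mem_Gw_lt (hq : 0 < q) :
    ∀ w : List ℕ, (∀ x ∈ w, x < p * q) → ∀ x ∈ Gw p q w, x < p * q
  | [], _ => by simp [Gw_nil]
  | [_], _ => by simp [Gw_singleton]
  | a :: b :: w, hw => by
    rw [Gw_cons_cons]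
    rintro x (_ | ⟨_, hx⟩)
    · exact g_lt_mul hq a (hw b (by simp))
    · exact forall_mem_Gw_lt hq (b :: w) (fun y hy => hw y (List.mem_cons_of_mem _ hy)) x hx

theorem forall_mem_Gw_iterate_lt (hq : 0 < q) (s : ℕ) {w : List ℕ} (hw : ∀ x ∈ w, x < p * q) :
    ∀ x ∈ (Gw p q)^[s] w, x < p * q := by
  induction s generalizing w with
  | zero => exact hw
  | succ s ih => exact ih (forall_mem_Gw_lt hq w hw)

theorem intw_cons_div (hq : 0 < q) (a : ℕ) (w : List ℕ) :
    intw (p * q) (a :: w) / q =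
      intw (p * q) (Gw p q (a :: w)) + (p * q) ^ w.length * (a / q) := by
  induction w generalizing a with
  | nil => simp [intw_cons, intw_nil, Gw_singleton]
  | cons b w ih =>
    have hshift : intw (p * q) (a :: b :: w) / q =
        intw (p * q) (b :: w) / q + p * (p * q) ^ w.length * a := by
      rw [intw_cons, List.length_cons, ← Nat.add_mul_div_right _ _ hq, pow_succ]
      congr 1
      ring
    have hlen : (Gw p q (b :: w)).length = w.length := by simp [length_Gw]
    have ha := Nat.div_add_mod a q
    rw [hshift, ih, Gw_cons_cons, intw_cons, hlen, List.length_cons, g]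
    grind

theorem intw_Gw_modEq (hq : 0 < q) (w : List ℕ) :
    intw (p * q) (Gw p q w) ≡ intw (p * q) w / q [MOD (p * q) ^ (w.length - 1)] := by
  cases w with
  | nil => rw [Gw_nil, intw_nil, Nat.zero_div]
  | cons a w =>
    rw [intw_cons_div hq, List.length_cons, Nat.add_sub_cancel]
    exact (Nat.add_mul_mod_self_left _ _ _).symm

theorem intw_Gw_iterate_modEq (hq : 0 < q) (s : ℕ) (w : List ℕ) :
    intw (p * q) ((Gw p q)^[s] w) ≡ intw (p * q) w / q ^ s [MOD (p * q) ^ (w.length - s)] := by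
  induction s with
  | zero => simp [Nat.ModEq]
  | succ s ih =>
    rcases le_or_gt w.length s with hle | hlt
    · rw [show w.length - (s + 1) = 0 by omega, pow_zero]
      exact Nat.modEq_one
    · obtain ⟨m, hm⟩ : ∃ m, w.length - s = m + 1 := ⟨w.length - s - 1, by omega⟩
      have hstep := intw_Gw_modEq (p := p) hq ((Gw p q)^[s] w)
      rw [length_Gw_iterate, hm, Nat.add_sub_cancel] at hstep
      have hdiv : intw (p * q) ((Gw p q)^[s] w) / q ≡ intw (p * q) w / q ^ s / q
          [MOD (p * q) ^ m] := by
        rw [hm, show (p * q) ^ (m + 1) = q * (p * (p * q) ^ m) by ring] at ih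
        exact ih.div_of_mul.of_mul_left p
      rw [Function.iterate_succ_apply', show w.length - (s + 1) = m by omega, pow_succ,
        ← Nat.div_div_eq_div_mul]
      exact hstep.trans hdiv

end Words

theorem stmt14_general (p q : ℕ) (hp : 2 ≤ p) (hq : 2 ≤ q)
    (t : ℕ) (k : ℕ) (hk : 2 * t + 1 ≤ k) (w₁ w₂ : List ℕ)
    (hw₁ : w₁.length = k) (hw₂ : w₂.length = k)
    (hb₁ : ∀ x ∈ w₁, x < p * q) :
    (intw (p * q) w₁ < q ^ (2 * t) → intw (p * q) ((Fw p q)^[t] w₁) = 0) ∧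
    (intw (p * q) w₂ ≡ intw (p * q) w₁ + q ^ (2 * t) [MOD (p * q) ^ k] →
      intw (p * q) ((Fw p q)^[t] w₂) ≡ intw (p * q) ((Fw p q)^[t] w₁) + 1
        [MOD (p * q) ^ (k - 2 * t)]) := by
  have hq0 : 0 < q := by omega
  have hF₁ := intw_Gw_iterate_modEq (p := p) hq0 (2 * t) w₁
  have hF₂ := intw_Gw_iterate_modEq (p := p) hq0 (2 * t) w₂
  rw [hw₁] at hF₁
  rw [hw₂] at hF₂
  rw [Fw_iterate]
  constructor
  · intro hsmall
    have hlt : intw (p * q) ((Gw p q)^[2 * t] w₁) < (p * q) ^ (k - 2 * t) := by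
      rw [← hw₁, ← length_Gw_iterate]
      exact intw_lt_pow_length (by nlinarith) (forall_mem_Gw_iterate_lt hq0 (2 * t) hb₁)
    rw [Nat.div_eq_of_lt hsmall] at hF₁
    simpa only [Nat.ModEq, Nat.mod_eq_of_lt hlt, Nat.zero_mod] using hF₁
  · intro hshift
    have hdvd : q ^ (2 * t) * (p * q) ^ (k - 2 * t) ∣ (p * q) ^ k := by
      rw [show k = 2 * t + (k - 2 * t) by omega, pow_add, Nat.add_sub_cancel_left]
      exact Nat.mul_dvd_mul_right (pow_dvd_pow_of_dvd (dvd_mul_left q p) _) _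
    calc intw (p * q) ((Gw p q)^[2 * t] w₂)
        ≡ intw (p * q) w₂ / q ^ (2 * t) [MOD (p * q) ^ (k - 2 * t)] := hF₂
      _ ≡ (intw (p * q) w₁ + q ^ (2 * t)) / q ^ (2 * t) [MOD (p * q) ^ (k - 2 * t)] :=
        (hshift.of_dvd hdvd).div_of_mul
      _ = intw (p * q) w₁ / q ^ (2 * t) + 1 := Nat.add_div_right _ (by positivity)
      _ ≡ intw (p * q) ((Gw p q)^[2 * t] w₁) + 1 [MOD (p * q) ^ (k - 2 * t)] :=
        hF₁.symm.add_right 1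

theorem stmt14 (p q : ℕ) (hp : 2 ≤ p) (hq : 2 ≤ q) (hpq : Nat.Coprime p q)
    (t : ℕ) (ht : 0 < t) (k : ℕ) (hk : 2 * t + 1 ≤ k) (w₁ w₂ : List ℕ)
    (hw₁ : w₁.length = k) (hw₂ : w₂.length = k)
    (hb₁ : ∀ x ∈ w₁, x < p * q) (hb₂ : ∀ x ∈ w₂, x < p * q) :
    (intw (p * q) w₁ < q ^ (2 * t) → intw (p * q) ((Fw p q)^[t] w₁) = 0) ∧
    (intw (p * q) w₂ ≡ intw (p * q) w₁ + q ^ (2 * t) [MOD (p * q) ^ k] →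
      intw (p * q) ((Fw p q)^[t] w₂) ≡ intw (p * q) ((Fw p q)^[t] w₁) + 1
        [MOD (p * q) ^ (k - 2 * t)]) :=
  stmt14_general p q hp hq t k hk w₁ w₂ hw₁ hw₂ hb₁
end
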